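/- arXiv:1907.10005 — 8 statements merged into one kernel-verified Lean document; each statement's English description precedes it below -/
import Mathlib

section
/- The asymptotic filtered colimit 𝓛 of {(X_s,𝓛_s)}_{s∈S} is a large scale structure on X; that is, 𝓛 satisfies both: (1) if 𝓥 ∈ 𝓛 and 𝓤 is a family of subsets of X such that every U ∈ 𝓤 with more than one point is contained in some member of 𝓥, then 𝓤 ∈ 𝓛; and (2) if 𝓤, 𝓥 ∈ 𝓛 then st(𝓥,𝓤) ∈ 𝓛. -/
open Set

/-- The star of a set `V` against a family `U`: the union of all members of `U` meeting `V`. -/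
def lsStar {X : Type*} (V : Set X) (U : Set (Set X)) : Set X :=
  ⋃₀ {u ∈ U | (u ∩ V).Nonempty}

/-- The family `st(𝓥,𝓤) = {st(V,𝓤) : V ∈ 𝓥}`. -/
def lsStarFam {X : Type*} (V U : Set (Set X)) : Set (Set X) :=
  (fun v => lsStar v U) '' V

/-- A large scale structure on the subset `A` of `X`: a nonempty collection of families of
subsets of `A` closed under (1) replacing a family by any family whose members with more than
one point refine it, and (2) stars. -/
structure IsLSS {X : Type*} (A : Set X) (L : Set (Set (Set X))) : Prop where
  nonempty : L.Nonempty
  mem_sub : ∀ U ∈ L, ∀ u ∈ U, u ⊆ A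
  refine : ∀ V ∈ L, ∀ U : Set (Set X), (∀ u ∈ U, u ⊆ A) →
    (∀ u ∈ U, u.Nontrivial → ∃ v ∈ V, u ⊆ v) → U ∈ L
  star_mem : ∀ U ∈ L, ∀ V ∈ L, lsStarFam V U ∈ L

/-- The data for an asymptotic filtered colimit: subsets `Xs s` of `X` covering `X`, each with a
large scale structure `L s`, whose restrictions to pairwise intersections coincide, and which are
directed. -/
structure AFCSetup (X S : Type*) where
  Xs : S → Set X
  L : S → Set (Set (Set X))
  lss : ∀ s, IsLSS (Xs s) (L s)
  covers : ⋃ s, Xs s = Set.univ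
  compat : ∀ r s : S, ∀ U : Set (Set X), (∀ u ∈ U, u ⊆ Xs r ∩ Xs s) → (U ∈ L r ↔ U ∈ L s)
  directed : ∀ r s : S, ∃ t, Xs r ∪ Xs s ⊆ Xs t

/-- The asymptotic filtered colimit: `𝓤` is uniformly bounded iff there are `s ∈ S` and
`𝓥 ∈ 𝓛_s` such that every member of `𝓤` with more than one point is contained in a member
of `𝓥`. -/
def AFCSetup.colim {X S : Type*} (C : AFCSetup X S) : Set (Set (Set X)) :=
  {U | ∃ s, ∃ V ∈ C.L s, ∀ u ∈ U, u.Nontrivial → ∃ v ∈ V, u ⊆ v}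

/-- The asymptotic filtered colimit is a large scale structure on `X`. -/
theorem stmt0 {X S : Type*} [Nonempty S] (C : AFCSetup X S) :
    IsLSS (Set.univ : Set X) C.colim := by
  constructor
  · obtain ⟨s⟩ := ‹Nonempty S›
    obtain ⟨V, hV⟩ := (C.lss s).nonempty
    exact ⟨∅, s, V, hV, by simp⟩
  · intro U _ u _
    exact subset_univ u
  · rintro V ⟨s, W, hW, hVW⟩ U _ hUV
    refine ⟨s, W, hW, ?_⟩
    intro u hu hnt
    obtain ⟨v, hv, huv⟩ := hUV u hu hnt
    obtain ⟨w, hw, hvw⟩ := hVW v hv (hnt.mono huv)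
    exact ⟨w, hw, huv.trans hvw⟩
  · rintro U ⟨s, Wu, hWu, hUW⟩ V ⟨t, Wv, hWv, hVW⟩
    obtain ⟨r, hr⟩ := C.directed s t
    have hsr : C.Xs s ⊆ C.Xs r := (subset_union_left).trans hr
    have htr : C.Xs t ⊆ C.Xs r := (subset_union_right).trans hr
    have hWur : Wu ∈ C.L r := by
      refine (C.compat r s Wu ?_).mpr hWu
      intro u hu
      exact subset_inter (((C.lss s).mem_sub Wu hWu u hu).trans hsr)
        ((C.lss s).mem_sub Wu hWu u hu)
    have hWvr : Wv ∈ C.L r := by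
      refine (C.compat r t Wv ?_).mpr hWv
      intro u hu
      exact subset_inter (((C.lss t).mem_sub Wv hWv u hu).trans htr)
        ((C.lss t).mem_sub Wv hWv u hu)
    set Sing : Set (Set X) := (fun x => ({x} : Set X)) '' C.Xs r with hSing
    have hSingSub : ∀ u ∈ Sing, u ⊆ C.Xs r := by
      rintro u ⟨x, hx, rfl⟩
      simpa using hx
    have hadd : ∀ W ∈ C.L r, W ∪ Sing ∈ C.L r := by
      intro W hW
      refine (C.lss r).refine W hW _ ?_ ?_
      · rintro u (hu | hu)
        · exact (C.lss r).mem_sub W hW u hu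
        · exact hSingSub u hu
      · rintro u (hu | ⟨x, hx, rfl⟩) hnt
        · exact ⟨u, hu, subset_rfl⟩
        · obtain ⟨a, ha, b, hb, hab⟩ := hnt
          simp only [mem_singleton_iff] at ha hb
          exact absurd (ha.trans hb.symm) hab
    have hWu' := hadd Wu hWur
    have hWv' := hadd Wv hWvr
    refine ⟨r, lsStarFam (Wv ∪ Sing) (Wu ∪ Sing),
      (C.lss r).star_mem _ hWu' _ hWv', ?_⟩
    rintro u ⟨v, hv, rfl⟩ hnt
    -- find w'' ∈ Wv ∪ Sing with v ⊆ w'' and w'' ⊆ Xs r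
    have key : ∃ w'', w'' ∈ Wv ∪ Sing ∧ v ⊆ w'' ∧ w'' ⊆ C.Xs r := by
      by_cases hvnt : v.Nontrivial
      · obtain ⟨w'', hw'', hvw⟩ := hVW v hv hvnt
        exact ⟨w'', Or.inl hw'', hvw,
          ((C.lss t).mem_sub Wv hWv w'' hw'').trans htr⟩
      · -- v is a subsingleton; since lsStar v U is nontrivial, v = {x} with x ∈ Xs r
        have hvss : v.Subsingleton := Set.not_nontrivial_iff.mp hvnt
        obtain ⟨a, ha, b, hb, hab⟩ := hnt
        obtain ⟨ua, ⟨huaU, hma⟩, haua⟩ := ha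
        obtain ⟨ub, ⟨hubU, hmb⟩, hbub⟩ := hb
        obtain ⟨x, hxa, hxv⟩ := hma
        have hvsub : v ⊆ {x} := fun y hy => hvss hy hxv
        -- one of a,b differs from x; get a nontrivial member of U containing x
        have hx_r : x ∈ C.Xs r := by
          rcases ne_or_eq a x with hax | hax
          · have hxua : x ∈ ua := hxa
            have : ua.Nontrivial := ⟨a, haua, x, hxua, hax⟩
            obtain ⟨u'', hu'', hsub⟩ := hUW ua huaU this
            exact hsr ((C.lss s).mem_sub Wu hWu u'' hu'' (hsub hxua))
          · obtain ⟨z, hzb, hzv⟩ := hmb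
            have hzx : z = x := by simpa using hvsub hzv
            have hbx : b ≠ x := hax ▸ hab.symm
            have : ub.Nontrivial := ⟨b, hbub, z, hzb, fun h => hbx (h.trans hzx)⟩
            obtain ⟨u'', hu'', hsub⟩ := hUW ub hubU this
            exact hsr ((C.lss s).mem_sub Wu hWu u'' hu'' (hsub (hzx ▸ hzb)))
        exact ⟨{x}, Or.inr ⟨x, hx_r, rfl⟩, hvsub, by simpa using hx_r⟩
    obtain ⟨w'', hw'', hvw, hwr⟩ := key
    refine ⟨lsStar w'' (Wu ∪ Sing), ⟨w'', hw'', rfl⟩, ?_⟩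
    intro y hy
    obtain ⟨u', ⟨hu'U, hmeet⟩, hyu'⟩ := hy
    by_cases hu'nt : u'.Nontrivial
    · obtain ⟨u'', hu'', hsub⟩ := hUW u' hu'U hu'nt
      obtain ⟨z, hz1, hz2⟩ := hmeet
      exact ⟨u'', ⟨Or.inl hu'', ⟨z, hsub hz1, hvw hz2⟩⟩, hsub hyu'⟩
    · have hss : u'.Subsingleton := Set.not_nontrivial_iff.mp hu'nt
      obtain ⟨z, hz1, hz2⟩ := hmeet
      have hyz : y = z := hss hyu' hz1
      have hyv : y ∈ v := hyz ▸ hz2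
      have hyw : y ∈ w'' := hvw hyv
      exact ⟨{y}, ⟨Or.inr ⟨y, hwr hyw, rfl⟩, ⟨y, rfl, hyw⟩⟩, rfl⟩
end

section
/- Let 𝓛 be the asymptotic filtered colimit of {(X_s,𝓛_s)}_{s∈S} on X. Then: (a) for every s ∈ S, 𝓛_s ⊆ 𝓛 (every family uniformly bounded in (X_s,𝓛_s) is uniformly bounded in (X,𝓛)); and (b) a family 𝓤 of subsets of X belongs to 𝓛 if and only if there exists s ∈ S such that 𝓤*, the family obtained from 𝓤 by removing all singletons {x} with x ∉ X_s, belongs to 𝓛_s (in particular every member of 𝓤 with more than one point is a subset of X_s). -/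
open Set

/-- `𝓤*`: the family `𝓤` with all singletons `{x}`, `x ∉ A`, removed. -/
def removeSingletonsOutside {X : Type*} (U : Set (Set X)) (A : Set X) : Set (Set X) :=
  U \ {u | ∃ x, x ∉ A ∧ u = {x}}

/-- (a) each `𝓛_s` is contained in the colimit `𝓛`; (b) `𝓤 ∈ 𝓛` iff for some
`s ∈ S` the family `𝓤*` obtained by removing all singletons outside `X_s` belongs to `𝓛_s`. -/
theorem stmt1 {X S : Type*} (C : AFCSetup X S) :
    (∀ s, C.L s ⊆ C.colim) ∧
    (∀ U : Set (Set X),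
      U ∈ C.colim ↔ ∃ s, removeSingletonsOutside U (C.Xs s) ∈ C.L s) := by
  constructor
  · intro s U hU
    exact ⟨s, U, hU, fun u hu _ => ⟨u, hu, subset_rfl⟩⟩
  · intro U
    constructor
    · rintro ⟨s, V, hV, h⟩
      refine ⟨s, (C.lss s).refine V hV _ ?_ ?_⟩
      · rintro u ⟨hu, hns⟩
        by_cases hnt : u.Nontrivial
        · obtain ⟨v, hv, huv⟩ := h u hu hnt
          exact huv.trans ((C.lss s).mem_sub V hV v hv)
        · have hsub := Set.not_nontrivial_iff.mp hnt
          rcases u.eq_empty_or_nonempty with rfl | ⟨x, hx⟩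
          · simp
          · have heq : u = {x} := hsub.eq_singleton_of_mem hx
            subst heq
            intro y hy
            rcases hy with rfl
            by_contra hxA
            exact hns ⟨y, hxA, rfl⟩
      · rintro u ⟨hu, _⟩ hnt
        exact h u hu hnt
    · rintro ⟨s, hU⟩
      refine ⟨s, _, hU, fun u hu hnt => ⟨u, ⟨hu, ?_⟩, subset_rfl⟩⟩
      rintro ⟨x, _, rfl⟩
      exact hnt.ne_singleton rfl
end

section
/- Let 𝓛_X be the asymptotic filtered colimit of {(X_s,𝓛_s)}_{s∈S} on X, and let (Y,𝓛_Y) be a large scale space. A function f : X → Y is large scale continuous (bornologous) with respect to 𝓛_X if and only if for every s ∈ S the restriction f|_{X_s} is large scale continuous with respect to 𝓛_s. -/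
open Set

/-- a function on an asymptotic filtered colimit is large scale continuous
(bornologous) iff its restriction to each `X_s` is. Here `f` is bornologous on a collection `L`
of uniformly bounded families when the image family `{f(u) : u ∈ 𝓤}` is uniformly bounded in
`Y` for each `𝓤 ∈ L`; since every member of a family in `𝓛_s` is a subset of `X_s`, taking
image families of members of `𝓛_s` is exactly bornologousness of `f|_{X_s}`. -/
theorem stmt2 {X S Y : Type*} (C : AFCSetup X S)
    (LY : Set (Set (Set Y))) (hLY : IsLSS (Set.univ : Set Y) LY) (f : X → Y) :
    (∀ U ∈ C.colim, (Set.image f) '' U ∈ LY) ↔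
      ∀ s, ∀ U ∈ C.L s, (Set.image f) '' U ∈ LY := by
  constructor
  · intro h s U hU
    exact h U ⟨s, U, hU, fun u hu _ => ⟨u, hu, subset_rfl⟩⟩
  · intro h U hU
    obtain ⟨s, V, hV, href⟩ := hU
    set W : Set (Set X) := {u ∈ U | u.Nontrivial} with hW
    have hWL : W ∈ C.L s := by
      refine (C.lss s).refine V hV W (fun u hu => ?_) (fun u hu _ => href u hu.1 hu.2)
      obtain ⟨v, hv, huv⟩ := href u hu.1 hu.2
      exact huv.trans ((C.lss s).mem_sub V hV v hv)
    have hfW : (Set.image f) '' W ∈ LY := h s W hWL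
    refine hLY.refine _ hfW _ (fun u _ => Set.subset_univ u) ?_
    rintro _ ⟨u, hu, rfl⟩ hnt
    refine ⟨f '' u, ⟨u, ⟨hu, ?_⟩, rfl⟩, subset_rfl⟩
    obtain ⟨a, ha, b, hb, hab⟩ := hnt
    obtain ⟨x, hx, rfl⟩ := ha
    obtain ⟨y, hy, rfl⟩ := hb
    exact ⟨x, hx, y, hy, fun e => hab (by rw [e])⟩
end

section
/- Let 𝓛 be the asymptotic filtered colimit of {(X_s,𝓛_s)}_{s∈S} on X, let Y be a metric space, and let f : X → Y. Then f is slowly oscillating with respect to 𝓛 if and only if for every s ∈ S the restriction f|_{X_s} is slowly oscillating with respect to 𝓛_s. -/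
open Set

/-- `x` and `y` are connected by a finite chain `U_1, …, U_n` of members of `𝓤` with
consecutive members intersecting, `x ∈ U_1` and `y ∈ U_n`. -/
def chainConnected {X : Type*} (U : Set (Set X)) (x y : X) : Prop :=
  ∃ n : ℕ, ∃ c : Fin (n + 1) → Set X, (∀ i, c i ∈ U) ∧
    (∀ i : Fin n, (c i.castSucc ∩ c i.succ).Nonempty) ∧ x ∈ c 0 ∧ y ∈ c (Fin.last n)

/-- The coarse chain component of `x`: the union of its `𝓤`-chain components over all
uniformly bounded families `𝓤 ∈ L`. -/
def coarseComponent {X : Type*} (L : Set (Set (Set X))) (x : X) : Set X :=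
  {y | ∃ U ∈ L, chainConnected U x y}

/-- `B` is weakly bounded: its intersection with each coarse chain component is contained in a
member of some uniformly bounded family. -/
def WeaklyBounded {X : Type*} (L : Set (Set (Set X))) (B : Set X) : Prop :=
  ∀ x : X, ∃ U ∈ L, ∃ u ∈ U, B ∩ coarseComponent L x ⊆ u

/-- `f` is slowly oscillating on the space `A` with large scale structure `L`: for every
`𝓤 ∈ L` and `ε > 0` there is a weakly bounded `B ⊆ A` such that every `U ∈ 𝓤` not contained
in `B` has `diam f(U) < ε`. -/
def SlowlyOscillating {X Y : Type*} [MetricSpace Y] (A : Set X) (L : Set (Set (Set X)))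
    (f : X → Y) : Prop :=
  ∀ U ∈ L, ∀ ε : ℝ, 0 < ε → ∃ B ⊆ A, WeaklyBounded L B ∧
    ∀ u ∈ U, ¬u ⊆ B → EMetric.diam (f '' u) < ENNReal.ofReal ε

/-!
Two points of `X_s` that are chain connected in the colimit span a pair `{y, z}` that is
uniformly bounded in some `𝓛_r`: each link of the chain is bounded in some `𝓛_t`, and links
are glued by a star inside a common `𝓛_t` (directedness). Compatibility moves the pair back to
`𝓛_s`, so a coarse chain component of the colimit meets `X_s` inside a coarse chain component
of `𝓛_s`, and weakly bounded subsets of `X_s` stay weakly bounded in the colimit. Conversely, a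
colimit bound `u ⊆ v ∈ 𝓥 ∈ 𝓛_t` gives `{u ∩ X_s} ∈ 𝓛_s`, so weakly bounded sets of the
colimit cut down to weakly bounded subsets of `X_s`.
-/

section

variable {X S : Type*}

lemma chainConnected_of_mem {U : Set (Set X)} {u : Set X} (hu : u ∈ U) {x y : X}
    (hx : x ∈ u) (hy : y ∈ u) : chainConnected U x y :=
  ⟨0, fun _ => u, fun _ => hu, fun i => i.elim0, hx, hy⟩

lemma chainConnected.rel_of_transitive {U : Set (Set X)} {R : X → X → Prop}
    (hR : ∀ a b c, R a b → R b c → R a c) (hU : ∀ u ∈ U, ∀ a ∈ u, ∀ b ∈ u, R a b) {x y : X}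
    (h : chainConnected U x y) : R x y := by
  obtain ⟨n, c, hc, hlink, hx, hy⟩ := h
  suffices ∀ k, ∀ p ∈ c k, R x p from this _ y hy
  intro k
  induction k using Fin.induction with
  | zero => exact hU _ (hc 0) x hx
  | succ k ih =>
    intro p hp
    obtain ⟨q, hq, hq'⟩ := hlink k
    exact hR _ _ _ (ih q hq) (hU _ (hc _) q hq' p hp)

namespace IsLSS

variable {A : Set X} {L : Set (Set (Set X))}

lemma singleton_mem_of_subsingleton (h : IsLSS A L) {u : Set X} (hu : u ⊆ A)
    (hs : u.Subsingleton) : ({u} : Set (Set X)) ∈ L := by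
  obtain ⟨V, hV⟩ := h.nonempty
  refine h.refine V hV _ ?_ ?_
  · rintro w rfl
    exact hu
  · rintro w rfl hw
    exact absurd hs hw.not_subsingleton

lemma pair_mem_of_mem (h : IsLSS A L) {U : Set (Set X)} (hU : U ∈ L) {u : Set X} (hu : u ∈ U)
    {a b : X} (ha : a ∈ u) (hb : b ∈ u) : ({{a, b}} : Set (Set X)) ∈ L := by
  have hab : ({a, b} : Set X) ⊆ u := insert_subset ha (singleton_subset_iff.2 hb)
  refine h.refine U hU _ ?_ ?_
  · rintro w rfl
    exact hab.trans (h.mem_sub U hU u hu)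
  · rintro w rfl -
    exact ⟨u, hu, hab⟩

/-- The star of `{a, b}` in `{{b, c}, {a}}` contains `a`, `b` and `c`. -/
lemma pair_mem_trans (h : IsLSS A L) {a b c : X} (hab : ({{a, b}} : Set (Set X)) ∈ L)
    (hbc : ({{b, c}} : Set (Set X)) ∈ L) : ({{a, c}} : Set (Set X)) ∈ L := by
  have ha : a ∈ A := h.mem_sub _ hab _ rfl (Or.inl rfl)
  have hc : c ∈ A := h.mem_sub _ hbc _ rfl (Or.inr rfl)
  have hP : ({{b, c}, {a}} : Set (Set X)) ∈ L := by
    refine h.refine _ hbc _ ?_ ?_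
    · rintro w (rfl | rfl)
      · exact h.mem_sub _ hbc _ rfl
      · exact singleton_subset_iff.2 ha
    · rintro w (rfl | rfl) hw
      · exact ⟨_, rfl, subset_rfl⟩
      · exact absurd subsingleton_singleton hw.not_subsingleton
  have hstar : lsStarFam {{a, b}} {{b, c}, {a}} ∈ L := h.star_mem _ hP _ hab
  refine h.refine _ hstar _ ?_ ?_
  · rintro w rfl
    exact insert_subset ha (singleton_subset_iff.2 hc)
  · rintro w rfl -
    refine ⟨_, mem_image_of_mem _ rfl, ?_⟩
    rintro p (rfl | rfl)
    · exact ⟨{p}, ⟨Or.inr rfl, p, rfl, Or.inl rfl⟩, rfl⟩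
    · exact ⟨{b, p}, ⟨Or.inl rfl, b, Or.inl rfl, Or.inr rfl⟩, Or.inr rfl⟩

end IsLSS

namespace AFCSetup

variable (C : AFCSetup X S)

lemma mem_L_of_subset {r s : S} {U : Set (Set X)} (hU : U ∈ C.L r)
    (hUs : ∀ u ∈ U, u ⊆ C.Xs s) : U ∈ C.L s := by
  obtain ⟨t, hrst⟩ := C.directed r s
  have hUr := (C.lss r).mem_sub U hU
  have hUt : U ∈ C.L t :=
    (C.compat r t U fun u hu => subset_inter (hUr u hu) ((hUr u hu).trans
      (subset_union_left.trans hrst))).1 hU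
  exact (C.compat t s U fun u hu => subset_inter ((hUs u hu).trans
    (subset_union_right.trans hrst)) (hUs u hu)).1 hUt

lemma L_subset_colim (s : S) : C.L s ⊆ C.colim :=
  fun U hU => ⟨s, U, hU, fun u hu _ => ⟨u, hu, subset_rfl⟩⟩

def PairBounded (a b : X) : Prop :=
  ∃ s, ({{a, b}} : Set (Set X)) ∈ C.L s

variable {C}

lemma PairBounded.refl (x : X) : C.PairBounded x x := by
  obtain ⟨s, hs⟩ := iUnion_eq_univ_iff.1 C.covers x
  refine ⟨s, (C.lss s).singleton_mem_of_subsingleton ?_ ?_⟩ <;> simp [hs]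

lemma PairBounded.symm {a b : X} (h : C.PairBounded a b) : C.PairBounded b a := by
  rwa [PairBounded, pair_comm]

lemma PairBounded.trans {a b c : X} (hab : C.PairBounded a b) (hbc : C.PairBounded b c) :
    C.PairBounded a c := by
  obtain ⟨r, hr⟩ := hab
  obtain ⟨s, hs⟩ := hbc
  obtain ⟨t, hrst⟩ := C.directed r s
  have hr' := C.mem_L_of_subset hr fun u hu =>
    ((C.lss r).mem_sub _ hr u hu).trans (subset_union_left.trans hrst)
  have hs' := C.mem_L_of_subset hs fun u hu =>
    ((C.lss s).mem_sub _ hs u hu).trans (subset_union_right.trans hrst)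
  exact ⟨t, (C.lss t).pair_mem_trans hr' hs'⟩

lemma PairBounded.of_chainConnected {U : Set (Set X)} (hU : U ∈ C.colim) {a b : X}
    (h : chainConnected U a b) : C.PairBounded a b := by
  obtain ⟨t, V, hV, hUV⟩ := hU
  refine h.rel_of_transitive (fun _ _ _ => PairBounded.trans) fun u hu p hp q hq => ?_
  by_cases hpq : p = q
  · exact hpq ▸ PairBounded.refl p
  · obtain ⟨v, hv, huv⟩ := hUV u hu ⟨p, hp, q, hq, hpq⟩
    exact ⟨t, (C.lss t).pair_mem_of_mem hV hv (huv hp) (huv hq)⟩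

lemma mem_coarseComponent_of_colim {s : S} {x y z : X} (hy : y ∈ C.Xs s) (hz : z ∈ C.Xs s)
    (hxy : y ∈ coarseComponent C.colim x) (hxz : z ∈ coarseComponent C.colim x) :
    z ∈ coarseComponent (C.L s) y := by
  obtain ⟨U₁, hU₁, hc₁⟩ := hxy
  obtain ⟨U₂, hU₂, hc₂⟩ := hxz
  obtain ⟨r, hr⟩ := ((PairBounded.of_chainConnected hU₁ hc₁).symm).trans
    (PairBounded.of_chainConnected hU₂ hc₂)
  have hpair : ({{y, z}} : Set (Set X)) ∈ C.L s := by
    refine C.mem_L_of_subset hr ?_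
    rintro w rfl
    exact insert_subset hy (singleton_subset_iff.2 hz)
  exact ⟨_, hpair, chainConnected_of_mem (mem_singleton _) (Or.inl rfl) (Or.inr rfl)⟩

lemma singleton_inter_mem {U : Set (Set X)} (hU : U ∈ C.colim) {u : Set X} (hu : u ∈ U)
    (s : S) : ({u ∩ C.Xs s} : Set (Set X)) ∈ C.L s := by
  rcases (u ∩ C.Xs s).subsingleton_or_nontrivial with hs | hnt
  · exact (C.lss s).singleton_mem_of_subsingleton inter_subset_right hs
  obtain ⟨t, V, hV, hUV⟩ := hU
  obtain ⟨v, hv, huv⟩ := hUV u hu (hnt.mono inter_subset_left)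
  have hsub : u ∩ C.Xs s ⊆ v := inter_subset_left.trans huv
  refine C.mem_L_of_subset ((C.lss t).refine V hV _ ?_ ?_) ?_
  · rintro w rfl
    exact hsub.trans ((C.lss t).mem_sub V hV v hv)
  · rintro w rfl -
    exact ⟨v, hv, hsub⟩
  · rintro w rfl
    exact inter_subset_right

lemma weaklyBounded_colim {s : S} {B : Set X} (hB : B ⊆ C.Xs s)
    (hwb : WeaklyBounded (C.L s) B) : WeaklyBounded C.colim B := by
  intro x
  rcases (B ∩ coarseComponent C.colim x).eq_empty_or_nonempty with hempty | ⟨b, hbB, hbx⟩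
  · obtain ⟨W, hW, w, hw, -⟩ := hwb x
    exact ⟨W, C.L_subset_colim s hW, w, hw, hempty ▸ empty_subset w⟩
  · obtain ⟨W, hW, w, hw, hBw⟩ := hwb b
    refine ⟨W, C.L_subset_colim s hW, w, hw, fun y hy => hBw ⟨hy.1, ?_⟩⟩
    exact mem_coarseComponent_of_colim (hB hbB) (hB hy.1) hbx hy.2

lemma weaklyBounded_inter {B : Set X} (hwb : WeaklyBounded C.colim B) (s : S) :
    WeaklyBounded (C.L s) (B ∩ C.Xs s) := by
  intro x
  obtain ⟨U, hU, u, hu, hBu⟩ := hwb x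
  refine ⟨_, singleton_inter_mem hU hu s, _, rfl, ?_⟩
  rintro y ⟨⟨hyB, hys⟩, W, hW, hxy⟩
  exact ⟨hBu ⟨hyB, W, C.L_subset_colim s hW, hxy⟩, hys⟩

variable {Y : Type*} [MetricSpace Y] {f : X → Y}

lemma slowlyOscillating_of_colim (h : SlowlyOscillating univ C.colim f) (s : S) :
    SlowlyOscillating (C.Xs s) (C.L s) f := by
  intro U hU ε hε
  obtain ⟨B, -, hwb, hdiam⟩ := h U (C.L_subset_colim s hU) ε hε
  refine ⟨B ∩ C.Xs s, inter_subset_right, weaklyBounded_inter hwb s, fun u hu hnot => ?_⟩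
  exact hdiam u hu fun huB => hnot (subset_inter huB ((C.lss s).mem_sub U hU u hu))

lemma slowlyOscillating_colim (h : ∀ s, SlowlyOscillating (C.Xs s) (C.L s) f) :
    SlowlyOscillating univ C.colim f := by
  rintro U ⟨s, V, hV, hUV⟩ ε hε
  obtain ⟨B, hBs, hwb, hdiam⟩ := h s V hV ε hε
  refine ⟨B, subset_univ B, weaklyBounded_colim hBs hwb, fun u hu huB => ?_⟩
  rcases u.subsingleton_or_nontrivial with hs | hnt
  · exact (Metric.ediam_subsingleton (hs.image f)).trans_lt (ENNReal.ofReal_pos.2 hε)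
  · obtain ⟨v, hv, huv⟩ := hUV u hu hnt
    exact (Metric.ediam_mono (image_mono huv)).trans_lt
      (hdiam v hv fun hvB => huB (huv.trans hvB))

end AFCSetup

end

/-- `f` is slowly oscillating on the asymptotic filtered colimit iff each
restriction `f|_{X_s}` is slowly oscillating on `(X_s, 𝓛_s)`. -/
theorem stmt3 {X S Y : Type*} [MetricSpace Y] (C : AFCSetup X S) (f : X → Y) :
    SlowlyOscillating (Set.univ : Set X) C.colim f ↔
      ∀ s, SlowlyOscillating (C.Xs s) (C.L s) f :=
  ⟨C.slowlyOscillating_of_colim, C.slowlyOscillating_colim⟩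
end

section
/- Let 𝓛 be the asymptotic filtered colimit of {(X_s,𝓛_s)}_{s∈S} on X and let n be a natural number. Then (X,𝓛) has asymptotic dimension at most n if and only if (X_s,𝓛_s) has asymptotic dimension at most n for every s ∈ S. -/
open Set

/-- The space `A` with large scale structure `L` has asymptotic dimension at most `n`: every
uniformly bounded family has a uniformly bounded coarsening of multiplicity at most `n + 1`. -/
def AsdimLE {X : Type*} (A : Set X) (L : Set (Set (Set X))) (n : ℕ) : Prop :=
  ∀ U ∈ L, ∃ V ∈ L, (∀ u ∈ U, ∃ v ∈ V, u ⊆ v) ∧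
    ∀ x ∈ A, {v | v ∈ V ∧ x ∈ v}.encard ≤ ((n + 1 : ℕ) : ℕ∞)

/-- the asymptotic filtered colimit has asymptotic dimension at most `n` iff
every `(X_s, 𝓛_s)` has asymptotic dimension at most `n`. -/
theorem stmt5 {X S : Type*} (C : AFCSetup X S) (n : ℕ) :
    AsdimLE (Set.univ : Set X) C.colim n ↔ ∀ s, AsdimLE (C.Xs s) (C.L s) n := by
  constructor
  · intro h s U hU
    obtain ⟨V, hVcolim, hcoarse, hmult⟩ :=
      h U ⟨s, U, hU, fun u hu _ => ⟨u, hu, subset_rfl⟩⟩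
    obtain ⟨t, W, hW, hVW⟩ := hVcolim
    obtain ⟨p, hp⟩ := C.directed s t
    have hsp : C.Xs s ⊆ C.Xs p := fun x hx => hp (Or.inl hx)
    have htp : C.Xs t ⊆ C.Xs p := fun x hx => hp (Or.inr hx)
    have hWp : W ∈ C.L p := by
      rw [← C.compat t p W (fun u hu => subset_inter ((C.lss t).mem_sub W hW u hu)
        (((C.lss t).mem_sub W hW u hu).trans htp))]
      exact hW
    set V' : Set (Set X) := (fun v => v ∩ C.Xs s) '' V with hV'
    have hV'sub : ∀ u ∈ V', u ⊆ C.Xs s := by rintro _ ⟨v, _, rfl⟩; exact inter_subset_right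
    have hV'p : V' ∈ C.L p := by
      apply (C.lss p).refine W hWp V' (fun u hu => (hV'sub u hu).trans hsp)
      rintro _ ⟨v, hv, rfl⟩ hnt
      obtain ⟨w, hw, hvw⟩ := hVW v hv (hnt.mono inter_subset_left)
      exact ⟨w, hw, inter_subset_left.trans hvw⟩
    have hV's : V' ∈ C.L s := by
      rw [← C.compat p s V' (fun u hu => subset_inter ((hV'sub u hu).trans hsp) (hV'sub u hu))]
      exact hV'p
    refine ⟨V', hV's, ?_, ?_⟩
    · intro u hu
      obtain ⟨v, hv, huv⟩ := hcoarse u hu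
      exact ⟨v ∩ C.Xs s, ⟨v, hv, rfl⟩, subset_inter huv ((C.lss s).mem_sub U hU u hu)⟩
    · intro x hx
      have hsub : {v | v ∈ V' ∧ x ∈ v} ⊆ (fun v => v ∩ C.Xs s) '' {v | v ∈ V ∧ x ∈ v} := by
        rintro _ ⟨⟨v, hv, rfl⟩, hxv⟩
        exact ⟨v, ⟨hv, hxv.1⟩, rfl⟩
      exact (Set.encard_mono hsub).trans
        ((Set.encard_image_le _ _).trans (hmult x (mem_univ x)))
  · intro h U hUcolim
    obtain ⟨s, V, hV, hUV⟩ := hUcolim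
    obtain ⟨W, hW, hcoarse, hmult⟩ := h s V hV
    set W' : Set (Set X) := insert ∅ (W ∪ {u | ∃ x, x ∉ ⋃₀ W ∧ u = {x}}) with hW'
    refine ⟨W', ⟨s, W, hW, ?_⟩, ?_, ?_⟩
    · rintro u hu hnt
      rcases hu with rfl | hu | ⟨x, _, rfl⟩
      · exact absurd hnt (by simp [Set.not_nontrivial_empty])
      · exact ⟨u, hu, subset_rfl⟩
      · exact absurd hnt (by simp [Set.not_nontrivial_singleton])
    · intro u hu
      by_cases hnt : u.Nontrivial
      · obtain ⟨v, hv, huv⟩ := hUV u hu hnt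
        obtain ⟨w, hw, hvw⟩ := hcoarse v hv
        exact ⟨w, Or.inr (Or.inl hw), huv.trans hvw⟩
      · rcases (Set.not_nontrivial_iff.mp hnt).eq_empty_or_singleton with rfl | ⟨x, rfl⟩
        · exact ⟨∅, Or.inl rfl, subset_rfl⟩
        · by_cases hx : x ∈ ⋃₀ W
          · obtain ⟨w, hw, hxw⟩ := hx
            exact ⟨w, Or.inr (Or.inl hw), by simpa using hxw⟩
          · exact ⟨{x}, Or.inr (Or.inr ⟨x, hx, rfl⟩), subset_rfl⟩
    · intro x _
      by_cases hx : x ∈ ⋃₀ W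
      · have heq : {w | w ∈ W' ∧ x ∈ w} = {w | w ∈ W ∧ x ∈ w} := by
          ext w
          constructor
          · rintro ⟨rfl | hw | ⟨y, hy, rfl⟩, hxw⟩
            · exact absurd hxw (by simp)
            · exact ⟨hw, hxw⟩
            · exact absurd hx (by rcases hxw with rfl; exact hy)
          · rintro ⟨hw, hxw⟩; exact ⟨Or.inr (Or.inl hw), hxw⟩
        obtain ⟨w, hw, hxw⟩ := hx
        have hxs : x ∈ C.Xs s := (C.lss s).mem_sub W hW w hw hxw
        rw [heq]
        exact hmult x hxs
      · have hsub : {w | w ∈ W' ∧ x ∈ w} ⊆ {({x} : Set X)} := by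
          rintro w ⟨rfl | hw | ⟨y, hy, rfl⟩, hxw⟩
          · exact absurd hxw (by simp)
          · exact absurd ⟨w, hw, hxw⟩ hx
          · rcases hxw with rfl; rfl
        refine (Set.encard_mono hsub).trans ?_
        simp only [Set.encard_singleton]
        exact_mod_cast Nat.one_le_iff_ne_zero.mpr (Nat.succ_ne_zero n)
end

section
/- Let H = ℓ²(ℕ,ℝ), let S be a countable index set, and let 𝓛 be the asymptotic filtered colimit of {(X_s,𝓛_s)}_{s∈S} on X with every X_s countable. If (X_s,𝓛_s) 1-pinch-spaces to H for every s ∈ S, then (X,𝓛) 1-pinch-spaces to H. -/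
open Set

/-- The space `A` with large scale structure `L` `c`-pinch-spaces to the metric space `K`:
for every uniformly bounded `𝓤` and `ε > 0` there are a uniformly bounded `𝓥` and a map
`f : A → K` with `sup_{U ∈ 𝓤} diam f(U) < ε` and `d(f x, f y) ≥ c` whenever no member of `𝓥`
contains both `x` and `y`. -/
def PinchSpaces {X K : Type*} [MetricSpace K] (A : Set X) (L : Set (Set (Set X)))
    (c : ℝ) : Prop :=
  ∀ U ∈ L, ∀ ε : ℝ, 0 < ε → ∃ V ∈ L, ∃ f : X → K,
    (⨆ u ∈ U, EMetric.diam (f '' u)) < ENNReal.ofReal ε ∧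
    ∀ x ∈ A, ∀ y ∈ A, (∀ v ∈ V, ¬(x ∈ v ∧ y ∈ v)) → c ≤ dist (f x) (f y)

/-!
Pick `s` and `𝓥 ∈ 𝓛_s` witnessing that `𝓤` is uniformly bounded, and let `g` and `𝓦 ∈ 𝓛_s` be
given by the pinch-spacing of `X_s`. Points outside `X_s` may be isolated (add all singletons
to `𝓦`). Send `X_s` through `g` followed by the right shift of `ℓ²`, and the remaining points
(countably many, as `S` and every `X_s` are countable) injectively to the multiples
`e₀, 2e₀, 3e₀, …` of the first basis vector. The shift is an isometry whose image has vanishing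
first coordinate, so distinct points off `X_s` land at distance `≥ 1` from each other and from
the image of `X_s`, while on `X_s` the map is `g` up to isometry.
-/

namespace lp

section Shift

variable {E : Type*} [NormedAddCommGroup E] {p : ENNReal}

def shiftRightFun (a : ℕ → E) : ℕ → E
  | 0 => 0
  | n + 1 => a n

lemma memℓp_shiftRightFun (hp : 0 < p.toReal) {a : ℕ → E} (ha : Memℓp a p) :
    Memℓp (shiftRightFun a) p := by
  apply memℓp_gen
  rw [← summable_nat_add_iff 1]
  exact (memℓp_gen_iff hp).1 ha

variable [Fact (1 ≤ p)]

def shiftRight (hp : p ≠ ⊤) (a : lp (fun _ : ℕ => E) p) : lp (fun _ : ℕ => E) p :=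
  ⟨shiftRightFun a, memℓp_shiftRightFun (p.toReal_pos_iff_ne_top.2 hp) a.2⟩

@[simp]
lemma shiftRight_apply_zero (hp : p ≠ ⊤) (a : lp (fun _ : ℕ => E) p) : shiftRight hp a 0 = 0 :=
  rfl

lemma norm_shiftRight (hp : p ≠ ⊤) (a : lp (fun _ : ℕ => E) p) : ‖shiftRight hp a‖ = ‖a‖ := by
  have hp' := p.toReal_pos_iff_ne_top.2 hp
  rw [norm_eq_tsum_rpow hp', norm_eq_tsum_rpow hp',
    ((memℓp_gen_iff hp').1 (shiftRight hp a).2).tsum_eq_zero_add]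
  simp [shiftRight, shiftRightFun, Real.zero_rpow hp'.ne']

lemma shiftRight_sub (hp : p ≠ ⊤) (a b : lp (fun _ : ℕ => E) p) :
    shiftRight hp (a - b) = shiftRight hp a - shiftRight hp b := by
  ext (_ | n)
  exacts [(sub_zero (0 : E)).symm, rfl]

lemma isometry_shiftRight (hp : p ≠ ⊤) : Isometry (shiftRight (E := E) hp) :=
  Isometry.of_dist_eq fun a b => by
    rw [dist_eq_norm, dist_eq_norm, ← shiftRight_sub, norm_shiftRight]

end Shift

lemma dist_apply_le_dist {α : Type*} {E : α → Type*} [∀ i, NormedAddCommGroup (E i)]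
    {p : ENNReal} [Fact (1 ≤ p)] (f g : lp E p) (i : α) : dist (f i) (g i) ≤ dist f g := by
  simpa [dist_eq_norm] using norm_apply_le_norm (zero_lt_one.trans_le Fact.out).ne' (f - g) i

variable {p : ENNReal} [Fact (1 ≤ p)]

lemma one_le_dist_single_shiftRight (hp : p ≠ ⊤) (n : ℕ) (a : lp (fun _ : ℕ => ℝ) p) :
    1 ≤ dist (lp.single (E := fun _ : ℕ => ℝ) p 0 ((n : ℝ) + 1)) (shiftRight hp a) := by
  refine le_trans ?_ (dist_apply_le_dist _ _ 0)
  simp only [lp.single_apply_self, shiftRight_apply_zero, Real.dist_eq, sub_zero]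
  rw [abs_of_nonneg (by positivity)]
  linarith [n.cast_nonneg (α := ℝ)]

lemma one_le_dist_single_single {m n : ℕ} (hmn : m ≠ n) :
    1 ≤ dist (lp.single (E := fun _ : ℕ => ℝ) p 0 ((m : ℝ) + 1))
      (lp.single (E := fun _ : ℕ => ℝ) p 0 ((n : ℝ) + 1)) := by
  refine le_trans ?_ (dist_apply_le_dist _ _ 0)
  rw [lp.single_apply_self, lp.single_apply_self, dist_add_right, Nat.dist_cast_real]
  exact Nat.pairwise_one_le_dist hmn

end lp

section Colimit

variable {X S K : Type*} [MetricSpace K]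

lemma AFCSetup.union_range_singleton_mem_colim (C : AFCSetup X S) {s : S} {W : Set (Set X)}
    (hW : W ∈ C.L s) : W ∪ range (singleton : X → Set X) ∈ C.colim := by
  refine ⟨s, W, hW, ?_⟩
  rintro u (hu | ⟨x, rfl⟩) hnt
  exacts [⟨u, hu, subset_rfl⟩, absurd hnt not_nontrivial_singleton]

lemma ediam_piecewise_image_le {A : Set X} [DecidablePred (· ∈ A)] {e : K → K} (he : Isometry e)
    (g q : X → K) {V : Set (Set X)} (hVA : ∀ v ∈ V, v ⊆ A) {u : Set X}
    (huV : u.Nontrivial → ∃ v ∈ V, u ⊆ v) :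
    Metric.ediam (A.piecewise (e ∘ g) q '' u) ≤ ⨆ v ∈ V, Metric.ediam (g '' v) := by
  rcases u.subsingleton_or_nontrivial with hu | hu
  · simp [Metric.ediam_subsingleton (hu.image _)]
  obtain ⟨v, hv, huv⟩ := huV hu
  have hcongr : A.piecewise (e ∘ g) q '' u = e '' (g '' u) := by
    rw [image_image]
    exact image_congr fun x hx => piecewise_eq_of_mem _ _ _ (hVA v hv (huv hx))
  calc Metric.ediam (A.piecewise (e ∘ g) q '' u) = Metric.ediam (g '' u) := by
        rw [hcongr, he.ediam_image]
    _ ≤ Metric.ediam (g '' v) := Metric.ediam_mono (image_mono huv)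
    _ ≤ ⨆ v ∈ V, Metric.ediam (g '' v) := le_iSup₂ (f := fun v _ => Metric.ediam (g '' v)) v hv

lemma le_dist_piecewise {A : Set X} [DecidablePred (· ∈ A)] {c : ℝ} {e : K → K} (he : Isometry e)
    {g q : X → K} (hq : Pairwise fun x y => c ≤ dist (q x) (q y))
    (hqe : ∀ x k, c ≤ dist (q x) (e k)) {x y : X} (hxy : x ≠ y)
    (hg : x ∈ A → y ∈ A → c ≤ dist (g x) (g y)) :
    c ≤ dist (A.piecewise (e ∘ g) q x) (A.piecewise (e ∘ g) q y) := by
  by_cases hx : x ∈ A <;> by_cases hy : y ∈ A <;>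
    simp only [piecewise_eq_of_mem, piecewise_eq_of_notMem, hx, hy, not_false_eq_true,
      Function.comp_apply]
  · rw [he.dist_eq]; exact hg hx hy
  · rw [dist_comm]; exact hqe y (g x)
  · exact hqe x (g y)
  · exact hq hxy

theorem AFCSetup.pinchSpaces_colim (C : AFCSetup X S) {c : ℝ} {e : K → K} (he : Isometry e)
    {q : X → K} (hq : Pairwise fun x y => c ≤ dist (q x) (q y))
    (hqe : ∀ x k, c ≤ dist (q x) (e k)) (h : ∀ s, PinchSpaces (K := K) (C.Xs s) (C.L s) c) :
    PinchSpaces (K := K) (univ : Set X) C.colim c := by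
  classical
  rintro U ⟨s, V, hV, hUV⟩ ε hε
  obtain ⟨W, hW, g, hdiam, hsep⟩ := h s V hV ε hε
  refine ⟨_, C.union_range_singleton_mem_colim hW, (C.Xs s).piecewise (e ∘ g) q,
    (iSup₂_le fun u hu => ?_).trans_lt hdiam, fun x _ y _ hxy => ?_⟩
  · exact ediam_piecewise_image_le he g q ((C.lss s).mem_sub V hV) (hUV u hu)
  · have hne : x ≠ y := by
      rintro rfl
      exact hxy {x} (Or.inr ⟨x, rfl⟩) ⟨rfl, rfl⟩
    exact le_dist_piecewise he hq hqe hne fun hx hy => hsep x hx y hy fun v hv => hxy v (Or.inl hv)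

end Colimit

/-- with `H = ℓ²(ℕ,ℝ)`, `S` countable and every `X_s` countable, if each
`(X_s, 𝓛_s)` 1-pinch-spaces to `H`, then the asymptotic filtered colimit `(X, 𝓛)`
1-pinch-spaces to `H`. -/
theorem stmt8 {X S : Type*} [Countable S] (C : AFCSetup X S)
    (hcnt : ∀ s, (C.Xs s).Countable)
    (h : ∀ s, PinchSpaces (K := lp (fun _ : ℕ => ℝ) 2) (C.Xs s) (C.L s) 1) :
    PinchSpaces (K := lp (fun _ : ℕ => ℝ) 2) (Set.univ : Set X) C.colim 1 := by
  have : Countable X := by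
    rw [← countable_univ_iff, ← C.covers]
    exact countable_iUnion hcnt
  obtain ⟨ι, hι⟩ := Countable.exists_injective_nat X
  have hp : (2 : ENNReal) ≠ ⊤ := ENNReal.ofNat_ne_top
  exact C.pinchSpaces_colim (lp.isometry_shiftRight hp)
    (q := fun x => lp.single 2 0 ((ι x : ℝ) + 1))
    (fun x y hxy => lp.one_le_dist_single_single (hι.ne hxy))
    (fun x a => lp.one_le_dist_single_shiftRight hp (ι x) a) h
end

section
/- Let 𝓛 be the asymptotic filtered colimit of {(X_s,𝓛_s)}_{s∈S} on X. If (X_s,𝓛_s) is a bounded geometry coarse space for every s ∈ S, then (X,𝓛) is a bounded geometry coarse space. -/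
open Set

/-- `L` is a bounded geometry coarse space: the cardinalities of the members of each uniformly
bounded family are uniformly finite. -/
def BoundedGeometry {X : Type*} (L : Set (Set (Set X))) : Prop :=
  ∀ U ∈ L, ∃ n : ℕ, ∀ u ∈ U, u.encard ≤ (n : ℕ∞)

/-- if each `(X_s, 𝓛_s)` is a bounded geometry coarse space, then so is the
asymptotic filtered colimit `(X, 𝓛)`. -/
theorem stmt13 {X S : Type*} (C : AFCSetup X S)
    (h : ∀ s, BoundedGeometry (C.L s)) :
    BoundedGeometry C.colim := by
  rintro U ⟨s, V, hV, hU⟩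
  obtain ⟨n, hn⟩ := h s V hV
  refine ⟨max n 1, fun u hu => ?_⟩
  by_cases hnt : u.Nontrivial
  · obtain ⟨v, hv, huv⟩ := hU u hu hnt
    exact le_trans ((Set.encard_le_encard huv).trans (hn v hv))
      (by exact_mod_cast Nat.le_max_left n 1)
  · have : u.Subsingleton := not_nontrivial_iff.mp hnt
    calc u.encard ≤ 1 := Set.encard_le_one_iff.mpr fun a b ha hb => this ha hb
    _ ≤ ((max n 1 : ℕ) : ℕ∞) := by exact_mod_cast Nat.le_max_right n 1
end

section
/- Let X = (0,1] ⊆ ℝ and for n ≥ 1 let X_n = [1/(n+1), 1] with the large scale structure 𝓛_n induced by the absolute-value metric (a family is in 𝓛_n iff the supremum of diameters of its members is finite); let 𝓛 be the asymptotic filtered colimit of {(X_n,𝓛_n)}_{n∈ℕ}. Let ℝ carry the metric large scale structure, and define f, g : X → ℝ by f(x) = 1/x and g(x) = 1. Then: (a) for every n, f|_{X_n} and g|_{X_n} are close; but (b) f and g are not close, i.e., there is no uniformly bounded family 𝓥 of subsets of ℝ such that for every x ∈ X there is V ∈ 𝓥 ∪ {{y} : y ∈ ℝ} with {f(x), g(x)}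 ⊆ V. -/
open Set

/-- `f` and `g`, restricted to `A`, are close as maps into `ℝ` with the metric large scale
structure: there is a uniformly bounded family `𝓥` of subsets of `ℝ` such that for every
`x ∈ A`, some member of `𝓥 ∪ {{y} : y ∈ ℝ}` contains both `f x` and `g x`. -/
def CloseOn (A : Set ℝ) (f g : ℝ → ℝ) : Prop :=
  ∃ V : Set (Set ℝ),
    (∃ M : ℝ, ∀ v ∈ V, ∀ a ∈ v, ∀ b ∈ v, |a - b| ≤ M) ∧
    ∀ x ∈ A, ∃ v ∈ V ∪ {w : Set ℝ | ∃ y : ℝ, w = {y}}, f x ∈ v ∧ g x ∈ v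

/-- with `X = (0,1]`, `X_n = [1/(n+1), 1]` (each with the metric large scale
structure), `f(x) = 1/x` and `g(x) = 1`: (a) for every `n ≥ 1`, `f|_{X_n}` and `g|_{X_n}` are
close; but (b) `f` and `g` are not close on `X = (0,1]`. -/
theorem stmt16 :
    (∀ n : ℕ, 1 ≤ n →
      CloseOn (Set.Icc (1 / (n + 1) : ℝ) 1) (fun x => 1 / x) (fun _ => 1)) ∧
    ¬ CloseOn (Set.Ioc (0 : ℝ) 1) (fun x => 1 / x) (fun _ => 1) := by
  constructor
  · intro n _
    refine ⟨{Set.Icc (1 : ℝ) (n + 1)}, ⟨n, ?_⟩, ?_⟩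
    · rintro v hv a ha b hb
      simp only [Set.mem_singleton_iff] at hv
      subst hv
      have h1 := ha.1; have h2 := ha.2; have h3 := hb.1; have h4 := hb.2
      rw [abs_le]; constructor <;> linarith
    · intro x hx
      have hn1 : (0 : ℝ) < n + 1 := by positivity
      have hx0 : 0 < x := lt_of_lt_of_le (by positivity) hx.1
      refine ⟨Set.Icc (1 : ℝ) (n + 1), Or.inl rfl, ⟨?_, ?_⟩, ?_⟩
      · rw [le_div_iff₀ hx0]; simpa using hx.2
      · rw [div_le_iff₀ hx0]
        calc (1 : ℝ) = (n + 1) * (1 / (n + 1)) := by field_simp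
        _ ≤ (n + 1) * x := by
            apply mul_le_mul_of_nonneg_left hx.1 (le_of_lt hn1)
      · simp
  · rintro ⟨V, ⟨M, hM⟩, h⟩
    set x : ℝ := 1 / (|M| + 2) with hxdef
    have hx0 : 0 < x := by positivity
    have hx1 : x ≤ 1 := by
      rw [hxdef, div_le_one (by positivity)]
      have := abs_nonneg M; linarith
    obtain ⟨v, hv, hfv, hgv⟩ := h x ⟨hx0, hx1⟩
    have hfx : (1 / x : ℝ) = |M| + 2 := by
      rw [hxdef]; field_simp
    rcases hv with hv | ⟨y, rfl⟩
    · have := hM v hv _ hfv _ hgv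
      simp only at this
      rw [hfx] at this
      have hMle : M ≤ |M| := le_abs_self M
      have : |(|M| + 2 - 1)| ≤ M := this
      rw [abs_of_nonneg (by have := abs_nonneg M; linarith)] at this
      linarith
    · simp only [Set.mem_singleton_iff] at hfv hgv
      have : (1 / x : ℝ) = 1 := by rw [hfv, ← hgv]
      rw [hfx] at this
      have := abs_nonneg M; linarith
end
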